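/- arXiv:2012.03941 — 2 statements merged into one kernel-verified Lean document; each statement's English description precedes it below -/
import Mathlib

section
/- Let X be a metric space, f: X → ℝ∪{+∞}, x ∈ dom f with f(x) > 0, and φ: ℝ → ℝ nondecreasing with φ(t) ≤ 0 for t ≤ 0, φ(t) > 0 for t > 0, differentiable on ]0, f(x)] with φ'(f(x)) > 0, and φ' nonincreasing on ]0,f(x)[. Then the nonlocal slope satisfies |∇(φ∘f)|⋄(x) ≥ φ'(f(x))·|∇f|⋄(x). -/
/-!
Write `a = f x`. As `φ'` is nonincreasing, `φ` is concave on `]0, a]`, so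
`φ'(a) (a - m) ≤ φ(a) - φ(m)` for `0 < m ≤ a`; letting `m ↓ 0` and using `φ > 0` on `]0, a[` gives
`φ'(a) a ≤ φ(a)`. Since `φ(t)₊ = 0` for `t ≤ 0`, together these say
`φ'(a) (a - f(u)₊) ≤ φ(a) - φ(f(u))₊`: every difference quotient of `f` at `x`, scaled by `φ'(a)`,
is dominated by the corresponding one of `φ ∘ f`.
-/

open Filter EMetric Set Topology
open scoped ENNReal NNReal

noncomputable def epos (a : EReal) : ℝ≥0∞ := if a = ⊤ then ⊤ else ENNReal.ofReal a.toReal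

noncomputable def nslope {X : Type*} [MetricSpace X] (f : X → EReal) (x : X) : ℝ≥0∞ :=
  ⨆ u ∈ {u : X | u ≠ x}, epos (f x - max (f u) 0) / edist u x

noncomputable def lslope {X : Type*} [MetricSpace X] (f : X → EReal) (x : X) : ℝ≥0∞ :=
  Filter.limsup (fun u => epos (f x - f u) / edist u x) (𝓝[≠] x)

lemma epos_coe (r : ℝ) : epos (r : EReal) = ENNReal.ofReal r := by
  simp [epos]

lemma epos_bot : epos (⊥ : EReal) = 0 := by
  simp [epos]

lemma EReal.max_zero_eq_coe_max_toReal {y : EReal} (hy : y ≠ ⊤) :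
    max y 0 = ((max y.toReal 0 : ℝ) : EReal) := by
  induction y using EReal.rec with
  | bot => simp
  | coe r => exact_mod_cast (EReal.coe_strictMono.monotone.map_max).symm
  | top => exact absurd rfl hy

lemma const_mul_nslope_le {X : Type*} [MetricSpace X] {f g : X → EReal} {x : X} {c : ℝ≥0∞}
    (h : ∀ u, u ≠ x → c * epos (f x - max (f u) 0) ≤ epos (g x - max (g u) 0)) :
    c * nslope f x ≤ nslope g x := by
  simp only [nslope, ENNReal.mul_iSup]
  refine iSup₂_le fun u hu => le_iSup₂_of_le u hu ?_
  rw [← mul_div_assoc]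
  exact ENNReal.div_le_div_right (h u hu) _

lemma concaveOn_Ioc_of_hasDerivAt_of_antitoneOn {φ φ' : ℝ → ℝ} {l a : ℝ}
    (hder : ∀ t ∈ Ioc l a, HasDerivAt φ (φ' t) t) (hanti : AntitoneOn φ' (Ioo l a)) :
    ConcaveOn ℝ (Ioc l a) φ := by
  have hder' : ∀ t ∈ Ioo l a, HasDerivAt φ (φ' t) t := fun t ht => hder t (Ioo_subset_Ioc_self ht)
  refine AntitoneOn.concaveOn_of_deriv (convex_Ioc l a)
    (fun t ht => (hder t ht).continuousAt.continuousWithinAt) ?_ ?_ <;> rw [interior_Ioc]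
  · exact fun t ht => (hder' t ht).differentiableAt.differentiableWithinAt
  · exact hanti.congr fun t ht => (hder' t ht).deriv.symm

lemma ConcaveOn.mul_sub_le_sub_of_hasDerivAt {S : Set ℝ} {f : ℝ → ℝ} {f' x y : ℝ}
    (hfc : ConcaveOn ℝ S f) (hx : x ∈ S) (hy : y ∈ S) (hxy : x ≤ y) (hf' : HasDerivAt f f' y) :
    f' * (y - x) ≤ f y - f x := by
  rcases hxy.eq_or_lt with rfl | hlt
  · simp
  have hslope := hfc.le_slope_of_hasDerivAt hx hy hlt hf'
  rwa [slope_def_field, le_div_iff₀ (sub_pos.2 hlt)] at hslope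

lemma ConcaveOn.mul_le_of_nonneg_Ioo {f : ℝ → ℝ} {f' a : ℝ} (hfc : ConcaveOn ℝ (Ioc 0 a) f)
    (ha : 0 < a) (hnonneg : ∀ t ∈ Ioo 0 a, 0 ≤ f t) (hf' : HasDerivAt f f' a) :
    f' * a ≤ f a := by
  have hbound : ∀ t ∈ Ioo 0 a, f' * (a - t) ≤ f a := fun t ht =>
    (hfc.mul_sub_le_sub_of_hasDerivAt (Ioo_subset_Ioc_self ht) (right_mem_Ioc.2 ha) ht.2.le
      hf').trans (sub_le_self _ (hnonneg t ht))
  simpa using le_on_closure hbound (by fun_prop) (by fun_prop)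
    (closure_Ioo ha.ne ▸ left_mem_Icc.2 ha.le : (0 : ℝ) ∈ closure (Ioo 0 a))

lemma mul_sub_max_le_sub_max {φ φ' : ℝ → ℝ} {a b : ℝ}
    (hφneg : ∀ t ≤ (0 : ℝ), φ t ≤ 0) (hφpos : ∀ t > (0 : ℝ), 0 < φ t)
    (hder : ∀ t ∈ Ioc 0 a, HasDerivAt φ (φ' t) t) (hanti : AntitoneOn φ' (Ioo 0 a))
    (hba : max b 0 < a) :
    φ' a * (a - max b 0) ≤ φ a - max (φ b) 0 := by
  have ha : 0 < a := (le_max_right b 0).trans_lt hba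
  have hfc := concaveOn_Ioc_of_hasDerivAt_of_antitoneOn hder hanti
  have hda := hder a (right_mem_Ioc.2 ha)
  rcases le_or_gt b 0 with hb | hb
  · rw [max_eq_right hb, max_eq_right (hφneg b hb), sub_zero, sub_zero]
    exact hfc.mul_le_of_nonneg_Ioo ha (fun t ht => (hφpos t ht.1).le) hda
  · rw [max_eq_left hb.le] at hba ⊢
    rw [max_eq_left (hφpos b hb).le]
    exact hfc.mul_sub_le_sub_of_hasDerivAt ⟨hb, hba.le⟩ (right_mem_Ioc.2 ha) hba.le hda

/-- Sends `⊥` to `φ 0`, as `EReal.toReal ⊥ = 0`. -/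
noncomputable def extendTop (φ : ℝ → ℝ) (y : EReal) : EReal :=
  if y = ⊤ then ⊤ else (φ y.toReal : EReal)

lemma ofReal_mul_epos_le_epos_extendTop {φ φ' : ℝ → ℝ} (y z : EReal)
    (hφneg : ∀ t ≤ (0 : ℝ), φ t ≤ 0) (hφpos : ∀ t > (0 : ℝ), 0 < φ t)
    (hder : ∀ t ∈ Ioc 0 y.toReal, HasDerivAt φ (φ' t) t)
    (hanti : AntitoneOn φ' (Ioo 0 y.toReal)) :
    ENNReal.ofReal (φ' y.toReal) * epos (y - max z 0) ≤
      epos (extendTop φ y - max (extendTop φ z) 0) := by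
  by_cases hz : z = ⊤
  · simp [hz, epos_bot]
  have hφz : max (extendTop φ z) 0 = ((max (φ z.toReal) 0 : ℝ) : EReal) := by
    simpa [extendTop, hz] using EReal.max_zero_eq_coe_max_toReal (EReal.coe_ne_top (φ z.toReal))
  rw [EReal.max_zero_eq_coe_max_toReal hz, hφz]
  induction y using EReal.rec with
  | bot => simp [epos_bot]
  | top => simp [extendTop, epos]
  | coe a =>
    simp only [extendTop, EReal.coe_ne_top, if_false, EReal.toReal_coe] at hder hanti ⊢
    rw [← EReal.coe_sub, ← EReal.coe_sub, epos_coe, epos_coe]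
    rcases le_or_gt a (max z.toReal 0) with hle | hlt
    · simp [ENNReal.ofReal_eq_zero.2 (sub_nonpos.2 hle)]
    · rw [← ENNReal.ofReal_mul' (sub_pos.2 hlt).le]
      exact ENNReal.ofReal_le_ofReal (mul_sub_max_le_sub_max hφneg hφpos hder hanti hlt)

theorem nslope_comp_ge_general {X : Type*} [MetricSpace X] (f : X → EReal) (x : X) (φ φ' : ℝ → ℝ)
    (hφneg : ∀ t ≤ (0 : ℝ), φ t ≤ 0) (hφpos : ∀ t > (0 : ℝ), 0 < φ t)
    (hder : ∀ t ∈ Set.Ioc (0 : ℝ) (f x).toReal, HasDerivAt φ (φ' t) t)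
    (hanti : AntitoneOn φ' (Set.Ioo (0 : ℝ) (f x).toReal)) :
    ENNReal.ofReal (φ' (f x).toReal) * nslope f x ≤
      nslope (fun u => if f u = ⊤ then (⊤ : EReal) else ((φ ((f u).toReal)) : EReal)) x :=
  const_mul_nslope_le fun u _ =>
    ofReal_mul_epos_le_epos_extendTop (f x) (f u) hφneg hφpos hder hanti

/-- nonlocal lslope chain rule inequality
`|∇(φ∘f)|⋄(x) ≥ φ'(f(x))·|∇f|⋄(x)` for a nondecreasing `φ : ℝ → ℝ` with `φ ≤ 0` on `ℝ₋`,
`φ > 0` on `ℝ₊`, differentiable on `]0, f(x)]` with `φ'(f(x)) > 0` and `φ'` nonincreasing on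
`]0, f(x)[`. -/
theorem nslope_comp_ge {X : Type*} [MetricSpace X] (f : X → EReal) (hbot : ∀ u, f u ≠ ⊥)
    (x : X) (hdom : f x ≠ ⊤) (hpos : 0 < f x)
    (φ φ' : ℝ → ℝ) (hφmono : Monotone φ)
    (hφneg : ∀ t ≤ (0 : ℝ), φ t ≤ 0) (hφpos : ∀ t > (0 : ℝ), 0 < φ t)
    (hder : ∀ t ∈ Set.Ioc (0 : ℝ) (f x).toReal, HasDerivAt φ (φ' t) t)
    (hd : 0 < φ' (f x).toReal)
    (hanti : AntitoneOn φ' (Set.Ioo (0 : ℝ) (f x).toReal)) :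
    ENNReal.ofReal (φ' (f x).toReal) * nslope f x ≤
      nslope (fun u => if f u = ⊤ then (⊤ : EReal) else ((φ ((f u).toReal)) : EReal)) x :=
  nslope_comp_ge_general f x φ φ' hφneg hφpos hder hanti
end

section
/- Let X be a complete metric space, f: X → ℝ∪{+∞} lower semicontinuous, x̄ ∈ [f≤0], τ > 0. If f admits a local τ-error bound at x̄ (i.e. there exist δ, μ ∈ ]0,+∞[ with τ·d(x,[f≤0]) ≤ f(x) for all x ∈ B_δ(x̄) with 0 < f(x) < μ), then liminf_{x→x̄, f(x)↓0} |∇f|⋄(x) ≥ τ; conversely, if |∇f|⋄(x) ≥ τ for all x with f(x) > 0 near x̄ with f(x) near 0, then f admits a local τ-error bound at x̄. Hence the local error bound modulus Er f(x̄) := liminf_{x→x̄, f(x)>0} f(x)/d(x,[f≤0]) equals liminf_{x→x̄, f(x)↓0} |∇f|⋄(x). -/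
open Filter EMetric Set Topology
open scoped ENNReal NNReal

/-!
Comparing `x` with the points of `[f ≤ 0]` in the supremum defining `|∇f|⋄(x)` gives
`f x / d(x, [f ≤ 0]) ≤ |∇f|⋄(x)` whenever `f x > 0`; this yields the first implication and the
inequality `Er f(x̄) ≤ liminf |∇f|⋄`. Conversely, if `f x < σ d(x, [f ≤ 0])` for some `σ < τ`,
Ekeland's variational principle for `f₊` with constant `σ` produces a point `y` that is closer to
`x` than `[f ≤ 0]` is, with `0 < f y ≤ f x` and `|∇f|⋄(y) ≤ σ`; so slopes `≥ τ` force the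
`τ`-error bound. For the modulus formula, the restriction `f x < μ` in an error bound can be
dropped near `x̄`, since there `τ d(x, [f ≤ 0]) ≤ τ d(x, x̄)` is small while `f x ≥ μ`.
-/

theorem epos_eq_toENNReal (a : EReal) : epos a = a.toENNReal := rfl

theorem epos_sub_max_zero (a b : EReal) : epos (a - max b 0) = epos a - epos b := by
  simp only [epos_eq_toENNReal, EReal.toENNReal_sub (le_max_right b 0)]
  rcases le_total b 0 with hb | hb
  · rw [max_eq_right hb, EReal.toENNReal_of_nonpos hb, EReal.toENNReal_zero]
  · rw [max_eq_left hb]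

theorem epos_lt_epos {a b : EReal} (hb : 0 < b) (hab : a < b) : epos a < epos b := by
  rcases le_total 0 a with ha | ha
  · exact EReal.toENNReal_lt_toENNReal ha hab
  · rw [epos_eq_toENNReal, EReal.toENNReal_of_nonpos ha]
    exact EReal.toENNReal_pos_iff.2 hb

theorem LowerSemicontinuous.epos_comp {Y : Type*} [TopologicalSpace Y] {f : Y → EReal}
    (hf : LowerSemicontinuous f) : LowerSemicontinuous fun y => epos (f y) :=
  EReal.continuous_toENNReal.comp_lowerSemicontinuous hf fun _ _ => EReal.toENNReal_le_toENNReal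

theorem ENNReal.exists_mem_forall_le_add {α : Type*} (g : α → ℝ≥0∞) {s : Set α}
    (hs : s.Nonempty) {ε : ℝ≥0∞} (hε : ε ≠ 0) : ∃ u ∈ s, ∀ w ∈ s, g u ≤ g w + ε := by
  by_cases htop : ⨅ w ∈ s, g w = ⊤
  · obtain ⟨v, hv⟩ := hs
    refine ⟨v, hv, fun w hw => ?_⟩
    rw [iInf₂_eq_top.1 htop w hw, top_add]
    exact le_top
  · have hlt := ENNReal.lt_add_right htop hε
    simp only [iInf_lt_iff] at hlt
    obtain ⟨u, hu, hlt⟩ := hlt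
    exact ⟨u, hu, fun w hw => hlt.le.trans (add_le_add_left (biInf_le g hw) ε)⟩

section Ekeland

variable {X : Type*} [EMetricSpace X] {g : X → ℝ≥0∞} {τ : ℝ≥0∞}

theorem add_mul_edist_le_trans {a b c : X} (hab : g a + τ * edist a b ≤ g b)
    (hbc : g b + τ * edist b c ≤ g c) : g a + τ * edist a c ≤ g c :=
  calc g a + τ * edist a c ≤ g a + τ * edist a b + τ * edist b c := by
        rw [add_assoc, ← mul_add]; gcongr; exact edist_triangle a b c
    _ ≤ g b + τ * edist b c := by gcongr
    _ ≤ g c := hbc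

theorem LowerSemicontinuous.isClosed_setOf_add_mul_edist_le (hg : LowerSemicontinuous g)
    (hτ : τ ≠ ⊤) (v : X) : IsClosed {u | g u + τ * edist u v ≤ g v} :=
  (hg.add ((ENNReal.continuous_const_mul hτ).comp
    (continuous_id.edist continuous_const)).lowerSemicontinuous).isClosed_preimage (g v)

theorem exists_seq_add_mul_edist_le (g : X → ℝ≥0∞) (τ : ℝ≥0∞) (x₀ : X) :
    ∃ x : ℕ → X, x 0 = x₀ ∧ (∀ n, g (x (n + 1)) + τ * edist (x (n + 1)) (x n) ≤ g (x n)) ∧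
      ∀ n w, g w + τ * edist w (x n) ≤ g (x n) → g (x (n + 1)) ≤ g w + 2⁻¹ ^ n := by
  have step : ∀ (n : ℕ) (v : X), ∃ u ∈ {w | g w + τ * edist w v ≤ g v},
      ∀ w ∈ {w | g w + τ * edist w v ≤ g v}, g u ≤ g w + 2⁻¹ ^ n := fun n v =>
    ENNReal.exists_mem_forall_le_add g ⟨v, by simp⟩ (by simp)
  choose F hF using step
  let x : ℕ → X := fun n => Nat.rec (motive := fun _ => X) x₀ F n
  exact ⟨x, rfl, fun n => (hF n (x n)).1, fun n => (hF n (x n)).2⟩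

variable [CompleteSpace X]

theorem LowerSemicontinuous.exists_ekeland (hg : LowerSemicontinuous g) (hτ₀ : τ ≠ 0)
    (hτ : τ ≠ ⊤) {x₀ : X} (hx₀ : g x₀ ≠ ⊤) :
    ∃ y, g y + τ * edist y x₀ ≤ g x₀ ∧ ∀ u, g u + τ * edist u y ≤ g y → u = y := by
  have hhalf : (2⁻¹ : ℝ≥0∞) < 1 := ENNReal.inv_lt_one.2 ENNReal.one_lt_two
  have hτ_inv : τ⁻¹ ≠ ⊤ := ENNReal.inv_ne_top.2 hτ₀
  obtain ⟨x, rfl, hstep, hmin⟩ := exists_seq_add_mul_edist_le g τ x₀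
  set T : ℕ → Set X := fun n => {u | g u + τ * edist u (x n) ≤ g (x n)} with hT
  have hchain : ∀ m n, m ≤ n → x n ∈ T m := by
    intro m n hmn
    induction n, hmn using Nat.le_induction with
    | base => simp [hT]
    | succ n _ ih => exact add_mul_edist_le_trans (hstep n) ih
  -- `x (n + 1)` minimises `g` on `T n ⊇ T (n + 1)` up to `2⁻ⁿ`
  have hshrink : ∀ n, ∀ u ∈ T (n + 1), edist u (x (n + 1)) ≤ τ⁻¹ * 2⁻¹ ^ n := by
    intro n u hu
    have hgu : g u ≠ ⊤ := ne_top_of_le_ne_top hx₀ <|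
      le_add_right le_rfl |>.trans (add_mul_edist_le_trans hu (hchain 0 (n + 1) n.succ_pos.le))
    have hle : g u + τ * edist u (x (n + 1)) ≤ g u + 2⁻¹ ^ n :=
      hu.trans (hmin n u (add_mul_edist_le_trans hu (hstep n)))
    rw [← ENNReal.mul_le_iff_le_inv hτ₀ hτ]
    exact (ENNReal.add_le_add_iff_left hgu).1 hle
  have hcauchy : CauchySeq fun n => x (n + 1) :=
    cauchySeq_of_edist_le_geometric 2⁻¹ τ⁻¹ hhalf hτ_inv
      fun n => edist_comm (x (n + 1)) (x (n + 2)) ▸ hshrink n _ (hchain _ _ n.succ.le_succ)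
  obtain ⟨y, hy⟩ := cauchySeq_tendsto_of_complete hcauchy
  have hyT : ∀ n, y ∈ T n := fun n =>
    (hg.isClosed_setOf_add_mul_edist_le hτ (x n)).mem_of_tendsto hy <|
      (eventually_ge_atTop n).mono fun k hk => hchain n (k + 1) (hk.trans k.le_succ)
  refine ⟨y, hyT 0, fun u hu => edist_eq_zero.1 (le_antisymm ?_ bot_le)⟩
  have hlim : Tendsto (fun n : ℕ => τ⁻¹ * 2⁻¹ ^ n + τ⁻¹ * 2⁻¹ ^ n) atTop (𝓝 0) := by
    have h := ENNReal.Tendsto.const_mul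
      (ENNReal.tendsto_pow_atTop_nhds_zero_of_lt_one hhalf) (Or.inr hτ_inv)
    simpa using h.add h
  refine ge_of_tendsto' hlim fun n => (edist_triangle_right u y (x (n + 1))).trans ?_
  exact add_le_add (hshrink n u (add_mul_edist_le_trans hu (hyT _))) (hshrink n y (hyT _))

end Ekeland

theorem EReal.nhdsGT_zero_basis :
    (𝓝[>] (0 : EReal)).HasBasis (fun μ : ℝ => 0 < μ) fun μ => Ioo 0 (μ : EReal) :=
  (nhdsGT_basis_of_exists_gt ⟨1, zero_lt_one⟩).to_hasBasis
    (fun _ hε => let ⟨μ, hμ, hμε⟩ := EReal.lt_iff_exists_real_btwn.1 hε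
      ⟨μ, EReal.coe_pos.1 hμ, Ioo_subset_Ioo_right hμε.le⟩)
    fun μ hμ => ⟨μ, EReal.coe_pos.2 hμ, subset_rfl⟩

section Slope

variable {X : Type*} [MetricSpace X] {f : X → EReal}

theorem nslope_eq_iSup (f : X → EReal) (x : X) :
    nslope f x = ⨆ u ∈ {u : X | u ≠ x}, (epos (f x) - epos (f u)) / edist u x := by
  simp only [nslope, epos_sub_max_zero]

theorem div_infEDist_le_nslope {x : X} (hx : 0 < f x) :
    epos (f x) / Metric.infEDist x {v | f v ≤ 0} ≤ nslope f x := by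
  rw [Metric.infEDist, div_eq_mul_inv, ENNReal.inv_iInf, ENNReal.mul_iSup, nslope_eq_iSup]
  refine iSup_le fun u => ?_
  rw [ENNReal.inv_iInf, ENNReal.mul_iSup]
  refine iSup_le fun hu => ?_
  have hux : u ≠ x := by rintro rfl; exact (not_le.2 hx) hu
  calc epos (f x) * (edist x u)⁻¹ = (epos (f x) - epos (f u)) / edist u x := by
        rw [epos_eq_toENNReal (f u), EReal.toENNReal_of_nonpos hu, tsub_zero, edist_comm,
          div_eq_mul_inv]
    _ ≤ _ := le_iSup₂ (f := fun u _ => (epos (f x) - epos (f u)) / edist u x) u hux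

theorem nslope_le_of_forall_add_mul_edist_le {y : X} {σ : ℝ≥0∞}
    (h : ∀ u, epos (f u) + σ * edist u y ≤ epos (f y) → u = y) : nslope f y ≤ σ := by
  rw [nslope_eq_iSup]
  refine iSup₂_le fun u hu => ENNReal.div_le_of_le_mul ?_
  exact tsub_le_iff_left.2 (not_le.1 (mt (h u) hu)).le

end Slope

section ErrorBound

variable {X : Type*} [MetricSpace X] {f : X → EReal}

theorem infEDist_sublevel_ne_zero (hf : LowerSemicontinuous f) {x : X} (hx : 0 < f x) :
    Metric.infEDist x {v | f v ≤ 0} ≠ 0 := by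
  have hclosed : IsClosed {v | f v ≤ 0} := hf.isClosed_preimage 0
  rw [← pos_iff_ne_zero, Metric.infEDist_pos_iff_notMem_closure, hclosed.closure_eq]
  exact not_le.2 hx

theorem eventually_nhds_inf_pos_inf_comap_iff {xb : X} {P : X → Prop} :
    (∀ᶠ x in 𝓝 xb ⊓ 𝓟 {x | 0 < f x} ⊓ comap f (𝓝 0), P x) ↔
      ∃ δ > (0 : ℝ), ∃ μ > (0 : ℝ), ∀ x ∈ Metric.eball xb (ENNReal.ofReal δ),
        0 < f x → f x < (μ : EReal) → P x := by
  have hL : 𝓝 xb ⊓ 𝓟 {x | 0 < f x} ⊓ comap f (𝓝 0) = 𝓝 xb ⊓ comap f (𝓝[>] 0) := by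
    rw [inf_assoc, nhdsWithin, comap_inf, comap_principal, inf_comm (𝓟 _)]
    rfl
  rw [hL, (Metric.nhds_basis_ball.inf (EReal.nhdsGT_zero_basis.comap f)).eventually_iff]
  simp only [Metric.eball_ofReal, Prod.exists, mem_inter_iff, mem_preimage, mem_Ioo,
    Metric.mem_ball, and_imp, and_assoc, exists_and_left, gt_iff_lt]

def HasLocalErrorBound (f : X → EReal) (xb : X) (τ : ℝ≥0∞) : Prop :=
  ∃ δ > (0 : ℝ), ∃ μ > (0 : ℝ), ∀ x ∈ Metric.eball xb (ENNReal.ofReal δ), 0 < f x →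
    f x < (μ : EReal) → τ * Metric.infEDist x {v | f v ≤ 0} ≤ epos (f x)

theorem le_liminf_nslope_of_hasLocalErrorBound (hf : LowerSemicontinuous f) {xb : X} {τ : ℝ≥0∞}
    (h : HasLocalErrorBound f xb τ) :
    τ ≤ liminf (nslope f) (𝓝 xb ⊓ 𝓟 {x | 0 < f x} ⊓ comap f (𝓝 0)) := by
  obtain ⟨δ, hδ, μ, hμ, h⟩ := h
  refine le_liminf_of_le (by isBoundedDefault) <|
    eventually_nhds_inf_pos_inf_comap_iff.2 ⟨δ, hδ, μ, hμ, fun x hx hfx hfμ => ?_⟩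
  have hfx_top : epos (f x) ≠ ⊤ := EReal.toENNReal_ne_top_iff.2 (ne_top_of_lt hfμ)
  exact ((ENNReal.le_div_iff_mul_le (Or.inl (infEDist_sublevel_ne_zero hf hfx))
    (Or.inr hfx_top)).2 (h x hx hfx hfμ)).trans (div_infEDist_le_nslope hfx)

theorem HasLocalErrorBound.eventually_le_div_infEDist {xb : X} {τ : ℝ≥0∞}
    (h : HasLocalErrorBound f xb τ) (hf : LowerSemicontinuous f) (hxb : f xb ≤ 0) (hτ : τ ≠ ⊤) :
    ∀ᶠ x in 𝓝 xb ⊓ 𝓟 {x | 0 < f x}, τ ≤ epos (f x) / Metric.infEDist x {v | f v ≤ 0} := by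
  obtain ⟨δ, hδ, μ, hμ, h⟩ := h
  have hρ : 0 < ENNReal.ofReal μ / τ := ENNReal.div_pos (ENNReal.ofReal_pos.2 hμ).ne' hτ
  filter_upwards [mem_inf_of_left (Metric.eball_mem_nhds xb (ENNReal.ofReal_pos.2 hδ)),
    mem_inf_of_left (Metric.eball_mem_nhds xb hρ), mem_inf_of_right (mem_principal_self _)]
    with x hxδ hxρ hfx
  have hD : Metric.infEDist x {v | f v ≤ 0} ≤ edist x xb := Metric.infEDist_le_edist_of_mem hxb
  rw [ENNReal.le_div_iff_mul_le (Or.inl (infEDist_sublevel_ne_zero hf hfx))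
    (Or.inl (ne_top_of_le_ne_top (edist_ne_top x xb) hD))]
  rcases lt_or_ge (f x) μ with hfμ | hfμ
  · exact h x hxδ hfx hfμ
  · calc τ * Metric.infEDist x {v | f v ≤ 0} ≤ τ * (ENNReal.ofReal μ / τ) := by
          gcongr; exact hD.trans hxρ.le
      _ ≤ epos μ := ENNReal.mul_div_le
      _ ≤ epos (f x) := EReal.toENNReal_le_toENNReal hfμ

variable [CompleteSpace X]

theorem exists_nslope_le_of_lt_mul_infEDist (hf : LowerSemicontinuous f) {x : X} {σ : ℝ≥0∞}
    (hσ : σ ≠ ⊤) (hx : epos (f x) < σ * Metric.infEDist x {v | f v ≤ 0}) :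
    ∃ y, edist y x < Metric.infEDist x {v | f v ≤ 0} ∧ 0 < f y ∧ f y ≤ f x ∧ nslope f y ≤ σ := by
  have hσ₀ : σ ≠ 0 := by rintro rfl; simp at hx
  obtain ⟨y, hyx, hmin⟩ := hf.epos_comp.exists_ekeland hσ₀ hσ (ne_top_of_lt hx)
  have hdist : edist y x < Metric.infEDist x {v | f v ≤ 0} :=
    (ENNReal.mul_lt_mul_iff_right hσ₀ hσ).1 ((le_add_left le_rfl).trans_lt (hyx.trans_lt hx))
  have hy : 0 < f y := not_le.1 fun hy =>
    hdist.not_ge (edist_comm x y ▸ Metric.infEDist_le_edist_of_mem hy)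
  refine ⟨y, hdist, hy, not_lt.1 fun hxy => ?_, nslope_le_of_forall_add_mul_edist_le hmin⟩
  exact (le_add_right le_rfl |>.trans hyx).not_gt (epos_lt_epos hy hxy)

theorem hasLocalErrorBound_of_le_nslope (hf : LowerSemicontinuous f) {xb : X} (hxb : f xb ≤ 0)
    {τ : ℝ≥0∞} (h : ∃ δ > (0 : ℝ), ∃ μ > (0 : ℝ), ∀ x ∈ Metric.eball xb (ENNReal.ofReal δ),
      0 < f x → f x < (μ : EReal) → τ ≤ nslope f x) :
    HasLocalErrorBound f xb τ := by
  obtain ⟨δ, hδ, μ, hμ, h⟩ := h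
  refine ⟨δ / 2, half_pos hδ, μ, hμ, fun x hx hfx hfμ => ?_⟩
  have hD : Metric.infEDist x {v | f v ≤ 0} ≤ edist x xb := Metric.infEDist_le_edist_of_mem hxb
  have hD₀ := infEDist_sublevel_ne_zero hf hfx
  have hD_top := ne_top_of_le_ne_top (edist_ne_top x xb) hD
  rw [← ENNReal.le_div_iff_mul_le (Or.inl hD₀) (Or.inl hD_top)]
  refine le_of_forall_lt_imp_le_of_dense fun σ hστ => ?_
  rw [ENNReal.le_div_iff_mul_le (Or.inl hD₀) (Or.inl hD_top)]
  by_contra! hlt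
  obtain ⟨y, hyx, hy, hfyx, hslope⟩ :=
    exists_nslope_le_of_lt_mul_infEDist hf (ne_top_of_lt hστ) hlt
  have hyb : y ∈ Metric.eball xb (ENNReal.ofReal δ) :=
    calc edist y xb ≤ edist y x + edist x xb := edist_triangle _ _ _
      _ < ENNReal.ofReal (δ / 2) + ENNReal.ofReal (δ / 2) :=
        ENNReal.add_lt_add ((hyx.trans_le hD).trans hx) hx
      _ = ENNReal.ofReal δ := by
        rw [← ENNReal.ofReal_add (by positivity) (by positivity), add_halves]
  exact ((h y hyb hy (hfyx.trans_lt hfμ)).trans hslope).not_gt hστ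

theorem liminf_div_infEDist_eq_liminf_nslope (hf : LowerSemicontinuous f) {xb : X}
    (hxb : f xb ≤ 0) :
    liminf (fun x => epos (f x) / Metric.infEDist x {v | f v ≤ 0}) (𝓝 xb ⊓ 𝓟 {x | 0 < f x}) =
      liminf (nslope f) (𝓝 xb ⊓ 𝓟 {x | 0 < f x} ⊓ comap f (𝓝 0)) := by
  refine le_antisymm ?_ <| le_of_forall_lt_imp_le_of_dense fun r hr => ?_
  · calc _ ≤ liminf (nslope f) (𝓝 xb ⊓ 𝓟 {x | 0 < f x}) :=
          liminf_le_liminf <| eventually_inf_principal.2 <|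
            .of_forall fun _ hx => div_infEDist_le_nslope hx
      _ ≤ _ := liminf_le_liminf_of_le inf_le_left
  · have hslope := eventually_nhds_inf_pos_inf_comap_iff.1 <|
      (eventually_lt_of_lt_liminf hr).mono fun _ => le_of_lt
    exact le_liminf_of_le (by isBoundedDefault) <|
      (hasLocalErrorBound_of_le_nslope hf hxb hslope).eventually_le_div_infEDist hf hxb
        (ne_top_of_lt hr)

end ErrorBound

theorem error_bound_modulus_eq_general {X : Type*} [MetricSpace X] [CompleteSpace X]
    (f : X → EReal) (hlsc : LowerSemicontinuous f)
    (xb : X) (hxb : f xb ≤ 0) :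
    (∀ τ : ℝ, 0 < τ →
      ((∃ δ > (0 : ℝ), ∃ μ > (0 : ℝ), ∀ x ∈ EMetric.ball xb (ENNReal.ofReal δ),
          0 < f x → f x < (μ : EReal) →
          ENNReal.ofReal τ * EMetric.infEdist x {v | f v ≤ 0} ≤ epos (f x)) →
        ENNReal.ofReal τ ≤
          Filter.liminf (fun x => nslope f x)
            (nhds xb ⊓ Filter.principal {x | 0 < f x} ⊓
              Filter.comap f (nhds (0 : EReal)))) ∧
      ((∃ δ > (0 : ℝ), ∃ μ > (0 : ℝ), ∀ x ∈ EMetric.ball xb (ENNReal.ofReal δ),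
          0 < f x → f x < (μ : EReal) → ENNReal.ofReal τ ≤ nslope f x) →
        (∃ δ > (0 : ℝ), ∃ μ > (0 : ℝ), ∀ x ∈ EMetric.ball xb (ENNReal.ofReal δ),
          0 < f x → f x < (μ : EReal) →
          ENNReal.ofReal τ * EMetric.infEdist x {v | f v ≤ 0} ≤ epos (f x)))) ∧
    Filter.liminf (fun x => epos (f x) / EMetric.infEdist x {v | f v ≤ 0})
        (nhds xb ⊓ Filter.principal {x | 0 < f x}) =
      Filter.liminf (fun x => nslope f x)
        (nhds xb ⊓ Filter.principal {x | 0 < f x} ⊓ Filter.comap f (nhds (0 : EReal))) :=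
  ⟨fun _ _ => ⟨le_liminf_nslope_of_hasLocalErrorBound hlsc,
      hasLocalErrorBound_of_le_nslope hlsc hxb⟩,
    liminf_div_infEDist_eq_liminf_nslope hlsc hxb⟩

/-- characterization of local `τ`-error bounds via the nonlocal lslope, and the
formula for the error bound modulus:
`Er f(x̄) = liminf_{x→x̄, f(x)↓0} |∇f|⋄(x)`. -/
theorem error_bound_modulus_eq {X : Type*} [MetricSpace X] [CompleteSpace X]
    (f : X → EReal) (hbot : ∀ u, f u ≠ ⊥) (hlsc : LowerSemicontinuous f)
    (xb : X) (hxb : f xb ≤ 0) :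
    (∀ τ : ℝ, 0 < τ →
      ((∃ δ > (0 : ℝ), ∃ μ > (0 : ℝ), ∀ x ∈ EMetric.ball xb (ENNReal.ofReal δ),
          0 < f x → f x < (μ : EReal) →
          ENNReal.ofReal τ * EMetric.infEdist x {v | f v ≤ 0} ≤ epos (f x)) →
        ENNReal.ofReal τ ≤
          Filter.liminf (fun x => nslope f x)
            (nhds xb ⊓ Filter.principal {x | 0 < f x} ⊓
              Filter.comap f (nhds (0 : EReal)))) ∧
      ((∃ δ > (0 : ℝ), ∃ μ > (0 : ℝ), ∀ x ∈ EMetric.ball xb (ENNReal.ofReal δ),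
          0 < f x → f x < (μ : EReal) → ENNReal.ofReal τ ≤ nslope f x) →
        (∃ δ > (0 : ℝ), ∃ μ > (0 : ℝ), ∀ x ∈ EMetric.ball xb (ENNReal.ofReal δ),
          0 < f x → f x < (μ : EReal) →
          ENNReal.ofReal τ * EMetric.infEdist x {v | f v ≤ 0} ≤ epos (f x)))) ∧
    Filter.liminf (fun x => epos (f x) / EMetric.infEdist x {v | f v ≤ 0})
        (nhds xb ⊓ Filter.principal {x | 0 < f x}) =
      Filter.liminf (fun x => nslope f x)
        (nhds xb ⊓ Filter.principal {x | 0 < f x} ⊓ Filter.comap f (nhds (0 : EReal))) :=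
  error_bound_modulus_eq_general f hlsc xb hxb
end
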